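/- For any finite simple graph G on n vertices, Q(G,3) = 3^n, where Q is the two-variable-free interlace polynomial of Aigner and van der Holst. -/

import Mathlib

/-- Local complementation at a vertex `v`: toggle all edges between
distinct neighbours of `v`. -/
def localComp {V : Type} (G : SimpleGraph V) (v : V) : SimpleGraph V where
  Adj x y := x ≠ y ∧ Xor' (G.Adj x y) (G.Adj v x ∧ G.Adj v y)
  symm := ⟨by
    intro x y ⟨hxy, h⟩
    refine ⟨hxy.symm, ?_⟩
    rw [G.adj_comm y x, and_comm]
    exact h⟩
  loopless := ⟨fun x h => h.1 rfl⟩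

/-- Edge local complementation on the edge `{u,v}`: `G*u*v*u`. -/
def elc {V : Type} (G : SimpleGraph V) (u v : V) : SimpleGraph V :=
  localComp (localComp (localComp G u) v) u

/-- Deletion of a vertex `u`: the induced subgraph on the other vertices. -/
def delVert {V : Type} (G : SimpleGraph V) (u : V) :
    SimpleGraph {w : V // w ≠ u} :=
  G.induce {w : V | w ≠ u}

section InterlaceRecursion

variable (Q : ∀ (W : Type) [Fintype W] [DecidableEq W], SimpleGraph W → Polynomial ℤ)

theorem eval_three_bot
    (hbase : ∀ (W : Type) [Fintype W] [DecidableEq W],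
      Q W (⊥ : SimpleGraph W) = Polynomial.X ^ (Fintype.card W))
    (V : Type) [Fintype V] [DecidableEq V] :
    (Q V ⊥).eval 3 = 3 ^ Fintype.card V := by
  simp [hbase]

/-- The recursion writes the value on `n + 1` vertices as a sum of three values on `n` vertices,
which at `x = 3` matches `3 ^ (n + 1) = 3 ^ n + 3 ^ n + 3 ^ n`. -/
theorem eval_three_eq_three_pow_of_card
    (hbase : ∀ (W : Type) [Fintype W] [DecidableEq W],
      Q W (⊥ : SimpleGraph W) = Polynomial.X ^ (Fintype.card W))
    (hrec : ∀ (W : Type) [Fintype W] [DecidableEq W] (G : SimpleGraph W)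
      (u v : W), G.Adj u v →
      Q W G = Q {w : W // w ≠ u} (delVert G u)
        + Q {w : W // w ≠ u} (delVert (elc G u v) u)
        + Q {w : W // w ≠ u} (delVert (localComp G u) u))
    {n : ℕ} : ∀ {V : Type} [Fintype V] [DecidableEq V] (G : SimpleGraph V),
      Fintype.card V = n → (Q V G).eval 3 = 3 ^ n := by
  induction n with
  | zero =>
    intro V _ _ G hV
    have : IsEmpty V := Fintype.card_eq_zero_iff.mp hV
    rw [Subsingleton.elim G ⊥, eval_three_bot Q hbase, hV]
  | succ n ih =>
    intro V _ _ G hV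
    obtain rfl | hG := eq_or_ne G ⊥
    · rw [eval_three_bot Q hbase, hV]
    obtain ⟨u, v, huv⟩ := SimpleGraph.ne_bot_iff_exists_adj.mp hG
    have hcard : Fintype.card {w : V // w ≠ u} = n := by simp [hV]
    rw [hrec V G u v huv, Polynomial.eval_add, Polynomial.eval_add, ih _ hcard, ih _ hcard,
      ih _ hcard]
    ring

end InterlaceRecursion

/-- For any graph `G` on `n` vertices, `Q(G,3) = 3^n`, where `Q` is the
interlace polynomial of Aigner and van der Holst, i.e. any function on
finite graphs satisfying `Q(E_n) = x^n` and
`Q(G) = Q(G\u) + Q(G^{(uv)}\u) + Q(G*u\u)` for every edge `{u,v}`. -/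
theorem interlace_Q_eval_three
    (Q : ∀ (W : Type) [Fintype W] [DecidableEq W], SimpleGraph W → Polynomial ℤ)
    (hbase : ∀ (W : Type) [Fintype W] [DecidableEq W],
      Q W (⊥ : SimpleGraph W) = Polynomial.X ^ (Fintype.card W))
    (hrec : ∀ (W : Type) [Fintype W] [DecidableEq W] (G : SimpleGraph W)
      (u v : W), G.Adj u v →
      Q W G = Q {w : W // w ≠ u} (delVert G u)
        + Q {w : W // w ≠ u} (delVert (elc G u v) u)
        + Q {w : W // w ≠ u} (delVert (localComp G u) u))
    {V : Type} [Fintype V] [DecidableEq V] (G : SimpleGraph V) :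
    (Q V G).eval 3 = 3 ^ (Fintype.card V) :=
  eval_three_eq_three_pow_of_card Q hbase hrec G rfl
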